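/- Under the Lyapunov block Arnoldi assumptions (residual R = U_{m+1} H_{m+1,m} E_m* Y U_m* + U_m Y E_m H_{m+1,m}* U_{m+1}* with Y Hermitian), the Frobenius norm of the residual is ‖R‖_F = √2 ‖H_{m+1,m} E_m* Y‖_F and the spectral norm is ‖R‖₂ = ‖H_{m+1,m} E_m* Y‖₂. -/

import Mathlib

open Matrix
open scoped ComplexOrder

noncomputable def frobNorm {m n : Type*} [Fintype m] [Fintype n] (M : Matrix m n ℂ) : ℝ :=
  Real.sqrt (∑ i, ∑ j, ‖M i j‖ ^ 2)

noncomputable def specNorm {m n : Type*} [Fintype m] [Fintype n] [DecidableEq n]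
    (M : Matrix m n ℂ) : ℝ :=
  ‖LinearMap.toContinuousLinearMap (Matrix.toEuclideanLin M)‖

/-- The block matrix `E_m = e_m ⊗ I_s`. -/
noncomputable def Em (m s : ℕ) : Matrix (Fin m × Fin s) (Fin s) ℂ :=
  fun p j => if p.1.val = m - 1 ∧ p.2 = j then 1 else 0

/-!
Put `B = H_{m+1,m} E_m^* Y`. Since `Y` is Hermitian, the two terms of `R` are adjoint to each
other, and with the isometry `W = [U_{m+1}, U_m]` the residual factors as
`R = W K W^*`, where `K = [[0, B], [B^*, 0]]`. Both norms are invariant under multiplication by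
isometries on the left and by their adjoints on the right, so they can be read off `K`:
its Frobenius norm counts the entries of `B` twice, and its spectral norm equals that of `B`,
because `K` maps `(u, v)` to `(B v, B^* u)`.
-/

namespace Matrix

open scoped Matrix.Norms.L2Operator

variable {𝕜 : Type*} [RCLike 𝕜] {l m n p q : Type*} [Fintype l] [Fintype m] [Fintype n]
  [Fintype p] [Fintype q]

theorem l2_opNorm_le_one_of_conjTranspose_mul_self_eq_one [DecidableEq n] {U : Matrix m n 𝕜}
    (hU : Uᴴ * U = 1) : ‖U‖ ≤ 1 := by
  have h_one : ‖(1 : Matrix n n 𝕜)‖ ≤ 1 := by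
    rw [← diagonal_one, l2_opNorm_diagonal]
    exact pi_norm_le_iff_of_nonneg zero_le_one |>.2 fun _ => by simp
  have h_sq := l2_opNorm_conjTranspose_mul_self U
  rw [hU] at h_sq
  nlinarith [norm_nonneg U]

theorem l2_opNorm_mul_of_conjTranspose_mul_self_eq_one [DecidableEq m] [DecidableEq n]
    [DecidableEq l] {U : Matrix m n 𝕜} (hU : Uᴴ * U = 1) (M : Matrix n l 𝕜) :
    ‖U * M‖ = ‖M‖ := by
  have hU_le := l2_opNorm_le_one_of_conjTranspose_mul_self_eq_one hU
  refine le_antisymm ((l2_opNorm_mul U M).trans (mul_le_of_le_one_left (norm_nonneg M) hU_le)) ?_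
  calc ‖M‖ = ‖Uᴴ * (U * M)‖ := by rw [← Matrix.mul_assoc, hU, Matrix.one_mul]
    _ ≤ ‖Uᴴ‖ * ‖U * M‖ := l2_opNorm_mul _ _
    _ ≤ ‖U * M‖ := by
      rw [l2_opNorm_conjTranspose]
      exact mul_le_of_le_one_left (norm_nonneg _) hU_le

theorem l2_opNorm_mul_conjTranspose_of_conjTranspose_mul_self_eq_one [DecidableEq m]
    [DecidableEq n] [DecidableEq l] {V : Matrix m n 𝕜} (hV : Vᴴ * V = 1) (M : Matrix l n 𝕜) :
    ‖M * Vᴴ‖ = ‖M‖ := by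
  rw [← l2_opNorm_conjTranspose, conjTranspose_mul, conjTranspose_conjTranspose,
    l2_opNorm_mul_of_conjTranspose_mul_self_eq_one hV, l2_opNorm_conjTranspose]

theorem l2_opNorm_fromBlocks_zero_zero_le [DecidableEq p] [DecidableEq q] (B : Matrix p q 𝕜)
    (C : Matrix q p 𝕜) : ‖fromBlocks 0 B C 0‖ ≤ max ‖B‖ ‖C‖ := by
  refine ContinuousLinearMap.opNorm_le_bound _ (by positivity) fun x => ?_
  set u : EuclideanSpace 𝕜 p := WithLp.toLp 2 (x ∘ Sum.inl)
  set v : EuclideanSpace 𝕜 q := WithLp.toLp 2 (x ∘ Sum.inr)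
  have hx : ‖x‖ ^ 2 = ‖u‖ ^ 2 + ‖v‖ ^ 2 := by
    simp [EuclideanSpace.norm_sq_eq, Fintype.sum_sum_type, u, v]
  have hKx : ‖(toEuclideanLin.trans LinearMap.toContinuousLinearMap) (fromBlocks 0 B C 0) x‖ ^ 2 =
      ‖(EuclideanSpace.equiv p 𝕜).symm (B *ᵥ v)‖ ^ 2 +
        ‖(EuclideanSpace.equiv q 𝕜).symm (C *ᵥ u)‖ ^ 2 := by
    simp [EuclideanSpace.norm_sq_eq, Fintype.sum_sum_type, u, v, fromBlocks_mulVec]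
  have hBv := (l2_opNorm_mulVec B v).trans <|
    mul_le_mul_of_nonneg_right (le_max_left _ ‖C‖) (norm_nonneg v)
  have hCu := (l2_opNorm_mulVec C u).trans <|
    mul_le_mul_of_nonneg_right (le_max_right ‖B‖ _) (norm_nonneg u)
  refine le_of_sq_le_sq ?_ (by positivity)
  rw [hKx, mul_pow, hx]
  nlinarith [pow_le_pow_left₀ (norm_nonneg _) hBv 2, pow_le_pow_left₀ (norm_nonneg _) hCu 2]

theorem l2_opNorm_fromBlocks_zero_conjTranspose_zero [DecidableEq p] [DecidableEq q]
    (B : Matrix p q 𝕜) : ‖fromBlocks 0 B Bᴴ 0‖ = ‖B‖ := by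
  refine le_antisymm ?_ ?_
  · simpa [l2_opNorm_conjTranspose] using l2_opNorm_fromBlocks_zero_zero_le B Bᴴ
  · set P := fromRows (1 : Matrix p p 𝕜) (0 : Matrix q p 𝕜)
    set Q := fromRows (0 : Matrix p q 𝕜) (1 : Matrix q q 𝕜)
    have hP : Pᴴ * P = 1 := by
      simp [P, conjTranspose_fromRows_eq_fromCols_conjTranspose, fromCols_mul_fromRows]
    have hQ : Qᴴ * Q = 1 := by
      simp [Q, conjTranspose_fromRows_eq_fromCols_conjTranspose, fromCols_mul_fromRows]
    calc ‖B‖ = ‖P * B‖ := (l2_opNorm_mul_of_conjTranspose_mul_self_eq_one hP B).symm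
      _ = ‖fromBlocks 0 B Bᴴ 0 * Q‖ := by simp [P, Q, fromBlocks_mul_fromRows]
      _ ≤ ‖fromBlocks 0 B Bᴴ 0‖ * ‖Q‖ := l2_opNorm_mul _ _
      _ ≤ ‖fromBlocks 0 B Bᴴ 0‖ :=
        mul_le_of_le_one_right (norm_nonneg _)
          (l2_opNorm_le_one_of_conjTranspose_mul_self_eq_one hQ)

end Matrix

section frobNorm

variable {m n p q : Type*} [Fintype m] [Fintype n] [Fintype p] [Fintype q]

theorem frobNorm_sq (M : Matrix m n ℂ) : frobNorm M ^ 2 = ∑ i, ∑ j, ‖M i j‖ ^ 2 :=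
  Real.sq_sqrt (by positivity)

@[simp]
theorem frobNorm_zero : frobNorm (0 : Matrix m n ℂ) = 0 := by
  simp [frobNorm]

theorem frobNorm_nonneg (M : Matrix m n ℂ) : 0 ≤ frobNorm M := Real.sqrt_nonneg _

theorem frobNorm_sq_eq_re_trace (M : Matrix m n ℂ) : frobNorm M ^ 2 = (Mᴴ * M).trace.re := by
  simp only [frobNorm_sq, trace, diag, mul_apply, conjTranspose_apply, Complex.re_sum,
    Complex.star_def, ← Complex.normSq_eq_conj_mul_self, Complex.ofReal_re, Complex.sq_norm]
  exact Finset.sum_comm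

theorem frobNorm_conjTranspose (M : Matrix m n ℂ) : frobNorm Mᴴ = frobNorm M := by
  simp only [frobNorm, conjTranspose_apply, norm_star]
  rw [Finset.sum_comm]

theorem frobNorm_mul_of_conjTranspose_mul_self_eq_one [DecidableEq n] {U : Matrix m n ℂ}
    (hU : Uᴴ * U = 1) (M : Matrix n p ℂ) : frobNorm (U * M) = frobNorm M := by
  rw [← sq_eq_sq₀ (frobNorm_nonneg _) (frobNorm_nonneg _), frobNorm_sq_eq_re_trace,
    frobNorm_sq_eq_re_trace, conjTranspose_mul, Matrix.mul_assoc, ← Matrix.mul_assoc Uᴴ, hU,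
    Matrix.one_mul]

theorem frobNorm_mul_conjTranspose_of_conjTranspose_mul_self_eq_one [DecidableEq n]
    {V : Matrix m n ℂ} (hV : Vᴴ * V = 1) (M : Matrix p n ℂ) : frobNorm (M * Vᴴ) = frobNorm M := by
  rw [← frobNorm_conjTranspose, conjTranspose_mul, conjTranspose_conjTranspose,
    frobNorm_mul_of_conjTranspose_mul_self_eq_one hV, frobNorm_conjTranspose]

theorem frobNorm_fromBlocks_sq (A : Matrix m p ℂ) (B : Matrix m q ℂ) (C : Matrix n p ℂ)
    (D : Matrix n q ℂ) : frobNorm (fromBlocks A B C D) ^ 2 =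
      frobNorm A ^ 2 + frobNorm B ^ 2 + frobNorm C ^ 2 + frobNorm D ^ 2 := by
  simp only [frobNorm_sq, Fintype.sum_sum_type, fromBlocks_apply₁₁, fromBlocks_apply₁₂,
    fromBlocks_apply₂₁, fromBlocks_apply₂₂, Finset.sum_add_distrib]
  ring

theorem frobNorm_fromBlocks_zero_conjTranspose_zero (B : Matrix m n ℂ) :
    frobNorm (fromBlocks 0 B Bᴴ 0) = Real.sqrt 2 * frobNorm B := by
  rw [← sq_eq_sq₀ (frobNorm_nonneg _) (mul_nonneg (Real.sqrt_nonneg 2) (frobNorm_nonneg B)),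
    frobNorm_fromBlocks_sq, frobNorm_conjTranspose, frobNorm_zero, frobNorm_zero, mul_pow,
    Real.sq_sqrt zero_le_two]
  ring

end frobNorm

open scoped Matrix.Norms.L2Operator in
theorem specNorm_eq_l2_opNorm {m n : Type*} [Fintype m] [Fintype n] [DecidableEq n]
    (M : Matrix m n ℂ) : specNorm M = ‖M‖ :=
  rfl

theorem lyapunov_residual_norms_general {n m s : ℕ}
    (Um : Matrix (Fin n) (Fin m × Fin s) ℂ) (U1 : Matrix (Fin n) (Fin s) ℂ)
    (Y : Matrix (Fin m × Fin s) (Fin m × Fin s) ℂ)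
    (H1 : Matrix (Fin s) (Fin s) ℂ)
    (R : Matrix (Fin n) (Fin n) ℂ)
    (hUm : Umᴴ * Um = 1) (hU1 : U1ᴴ * U1 = 1) (hUorth : U1ᴴ * Um = 0)
    (hYh : Y.IsHermitian)
    (hR : R = U1 * H1 * (Em m s)ᴴ * Y * Umᴴ + Um * Y * (Em m s) * H1ᴴ * U1ᴴ) :
    frobNorm R = Real.sqrt 2 * frobNorm (H1 * (Em m s)ᴴ * Y)
      ∧ specNorm R = specNorm (H1 * (Em m s)ᴴ * Y) := by
  set B := H1 * (Em m s)ᴴ * Y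
  set W := fromCols U1 Um
  have hW : Wᴴ * W = 1 := by
    rw [conjTranspose_fromCols_eq_fromRows_conjTranspose, fromRows_mul_fromCols, hU1, hUm, hUorth,
      ← conjTranspose_conjTranspose U1, ← conjTranspose_mul, hUorth, conjTranspose_zero,
      fromBlocks_one]
  have hRW : R = W * fromBlocks 0 B Bᴴ 0 * Wᴴ := by
    simp [hR, W, B, fromCols_mul_fromBlocks, conjTranspose_fromCols_eq_fromRows_conjTranspose,
      fromCols_mul_fromRows, conjTranspose_mul, hYh.eq, Matrix.mul_assoc, add_comm]
  rw [hRW]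
  constructor
  · rw [frobNorm_mul_conjTranspose_of_conjTranspose_mul_self_eq_one hW,
      frobNorm_mul_of_conjTranspose_mul_self_eq_one hW,
      frobNorm_fromBlocks_zero_conjTranspose_zero]
  · open scoped Matrix.Norms.L2Operator in
    rw [specNorm_eq_l2_opNorm, specNorm_eq_l2_opNorm,
      l2_opNorm_mul_conjTranspose_of_conjTranspose_mul_self_eq_one hW,
      l2_opNorm_mul_of_conjTranspose_mul_self_eq_one hW,
      l2_opNorm_fromBlocks_zero_conjTranspose_zero]

/-- Cheap residual norm formulas in the Lyapunov setting:
`‖R‖_F = √2 ‖H_{m+1,m} E_m* Y‖_F` and `‖R‖₂ = ‖H_{m+1,m} E_m* Y‖₂`. -/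
theorem lyapunov_residual_norms {n m s : ℕ} (hm : 0 < m)
    (Um : Matrix (Fin n) (Fin m × Fin s) ℂ) (U1 : Matrix (Fin n) (Fin s) ℂ)
    (Y : Matrix (Fin m × Fin s) (Fin m × Fin s) ℂ)
    (H1 : Matrix (Fin s) (Fin s) ℂ)
    (R : Matrix (Fin n) (Fin n) ℂ)
    (hUm : Umᴴ * Um = 1) (hU1 : U1ᴴ * U1 = 1) (hUorth : U1ᴴ * Um = 0)
    (hYh : Y.IsHermitian)
    (hR : R = U1 * H1 * (Em m s)ᴴ * Y * Umᴴ + Um * Y * (Em m s) * H1ᴴ * U1ᴴ) :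
    frobNorm R = Real.sqrt 2 * frobNorm (H1 * (Em m s)ᴴ * Y)
      ∧ specNorm R = specNorm (H1 * (Em m s)ᴴ * Y) :=
  lyapunov_residual_norms_general Um U1 Y H1 R hUm hU1 hUorth hYh hR
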